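/- Let f = Y^2 - X^3 in ℂ[X,Y] and m = ⟨X,Y⟩. The quotient ℂ[X,Y]/⟨Y^2 - X^3, m^4⟩ has ℂ-dimension 7. -/

import Mathlib

open MvPolynomial

/-!
Modulo `Y² - X³` a monomial `X^a Y^(b+2)` can be traded for `X^(a+3) Y^b`, and modulo `m⁴` every
monomial of degree at least 4 vanishes, so the seven classes of `X^a Y^b` with `b < 2` and
`a + b < 4` span the quotient. They are linearly independent because the parametrisation
`X ↦ t², Y ↦ t³` of the cusp descends to `R[t]/(t⁸)`, where it sends them to the distinct powers
`t^(2a+3b)` with `2a + 3b ∈ {0, 2, 3, 4, 5, 6, 7}`.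
-/

theorem Ideal.pow_mul_pow_mem_pow {A : Type*} [CommSemiring A] {J : Ideal A} {x y : A}
    (hx : x ∈ J) (hy : y ∈ J) {n a b : ℕ} (h : n ≤ a + b) : x ^ a * y ^ b ∈ J ^ n :=
  Ideal.pow_le_pow_right h <|
    pow_add J a b ▸ Ideal.mul_mem_mul (J.pow_mem_pow hx a) (J.pow_mem_pow hy b)

theorem AdjoinRoot.linearIndependent_root_X_pow_pow {R ι : Type*} [CommRing R] [Nontrivial R]
    {n : ℕ} {w : ι → ℕ} (hw : Function.Injective w) (hlt : ∀ i, w i < n) :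
    LinearIndependent R fun i => root (Polynomial.X ^ n : Polynomial R) ^ w i := by
  let pb := powerBasis' (Polynomial.monic_X_pow (R := R) n)
  have hdim : pb.dim = n := Polynomial.natDegree_X_pow n
  have := pb.basis.linearIndependent.comp (fun i => ⟨w i, by rw [hdim]; exact hlt i⟩)
    fun i j hij => hw (congrArg Fin.val hij)
  convert this using 1
  ext i
  simp [pb, PowerBasis.coe_basis]

noncomputable section

namespace CuspJet

variable (R : Type*) [CommRing R]

abbrev ideal : Ideal (MvPolynomial (Fin 2) R) :=
  Ideal.span {X 1 ^ 2 - X 0 ^ 3} ⊔ Ideal.span {X 0, X 1} ^ 4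

abbrev normalExponents : Finset (ℕ × ℕ) :=
  (Finset.range 4 ×ˢ Finset.range 2).filter fun e => e.1 + e.2 < 4

def normalClass (e : normalExponents) : MvPolynomial (Fin 2) R ⧸ ideal R :=
  Ideal.Quotient.mk _ (X 0 ^ e.1.1 * X 1 ^ e.1.2)

variable {R}

theorem mk_X_pow_mul_X_pow_eq_zero {a b : ℕ} (h : 4 ≤ a + b) :
    Ideal.Quotient.mk (ideal R) (X 0 ^ a * X 1 ^ b) = 0 :=
  Ideal.Quotient.eq_zero_iff_mem.2 <| Ideal.mem_sup_right <|
    Ideal.pow_mul_pow_mem_pow (Ideal.subset_span (by simp)) (Ideal.subset_span (by simp)) h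

theorem mk_X_pow_mul_X_pow_add_two (a b : ℕ) :
    Ideal.Quotient.mk (ideal R) (X 0 ^ a * X 1 ^ (b + 2)) =
      Ideal.Quotient.mk (ideal R) (X 0 ^ (a + 3) * X 1 ^ b) := by
  refine Ideal.Quotient.eq.2 <| Ideal.mem_sup_left <|
    Ideal.mem_span_singleton'.2 ⟨X 0 ^ a * X 1 ^ b, ?_⟩
  ring

theorem mk_X_pow_mul_X_pow_mem_span (a b : ℕ) :
    Ideal.Quotient.mk (ideal R) (X 0 ^ a * X 1 ^ b) ∈
      Submodule.span R (Set.range (normalClass R)) := by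
  induction b using Nat.strong_induction_on generalizing a with
  | _ b ih =>
  rcases lt_or_ge b 2 with hb | hb
  · by_cases hab : a + b < 4
    · exact Submodule.subset_span ⟨⟨(a, b), by simp; omega⟩, rfl⟩
    · rw [mk_X_pow_mul_X_pow_eq_zero (by omega)]
      exact Submodule.zero_mem _
  · obtain ⟨c, rfl⟩ := Nat.exists_eq_add_of_le' hb
    rw [mk_X_pow_mul_X_pow_add_two]
    exact ih c (by omega) _

theorem top_le_span_range_normalClass : ⊤ ≤ Submodule.span R (Set.range (normalClass R)) := by
  rintro q -
  obtain ⟨p, rfl⟩ := Ideal.Quotient.mkₐ_surjective R (ideal R) q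
  induction p using MvPolynomial.induction_on' with
  | monomial u c =>
    have hu : monomial u c = c • (X 0 ^ u 0 * X 1 ^ u 1 : MvPolynomial (Fin 2) R) := by
      rw [monomial_eq, Finsupp.prod_fintype _ _ (by simp), Fin.prod_univ_two, smul_eq_C_mul]
    rw [hu, map_smul]
    exact Submodule.smul_mem _ c (mk_X_pow_mul_X_pow_mem_span _ _)
  | add p q hp hq =>
    rw [map_add]
    exact Submodule.add_mem _ hp hq

def parametrization :
    MvPolynomial (Fin 2) R →ₐ[R] AdjoinRoot (Polynomial.X ^ 8 : Polynomial R) :=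
  aeval ![AdjoinRoot.root _ ^ 2, AdjoinRoot.root _ ^ 3]

theorem ideal_le_ker_parametrization : ideal R ≤ RingHom.ker (parametrization (R := R)) := by
  have hm : Ideal.span {X 0, X 1} ≤
      (Ideal.span {AdjoinRoot.root (.X ^ 8 : Polynomial R) ^ 2}).comap parametrization := by
    rw [Ideal.span_le]
    rintro p (rfl | rfl)
    · simp [parametrization]
    · simpa [parametrization, Ideal.mem_span_singleton] using pow_dvd_pow _ (by norm_num : 2 ≤ 3)
  refine sup_le ?_ ?_
  · rw [Ideal.span_le, Set.singleton_subset_iff]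
    simp [parametrization, ← pow_mul]
  · calc Ideal.span {X 0, X 1} ^ 4 ≤ _ := Ideal.pow_right_mono hm 4
      _ ≤ _ := Ideal.le_comap_pow _ 4
      _ = _ := by
        rw [Ideal.span_singleton_pow, ← pow_mul, ← AdjoinRoot.mk_X, ← map_pow,
          AdjoinRoot.mk_self, Ideal.span_singleton_eq_bot.2 rfl, RingHom.ker_eq_comap_bot]

def quotientParametrization :
    (MvPolynomial (Fin 2) R ⧸ ideal R) →ₐ[R] AdjoinRoot (Polynomial.X ^ 8 : Polynomial R) :=
  Ideal.Quotient.liftₐ _ parametrization fun _ hp =>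
    RingHom.mem_ker.1 (ideal_le_ker_parametrization hp)

theorem quotientParametrization_normalClass (e : normalExponents) :
    quotientParametrization (normalClass R e) = AdjoinRoot.root _ ^ (2 * e.1.1 + 3 * e.1.2) := by
  change parametrization (X 0 ^ e.1.1 * X 1 ^ e.1.2) = _
  simp [parametrization, pow_add, pow_mul]

theorem linearIndependent_normalClass [Nontrivial R] : LinearIndependent R (normalClass R) := by
  refine .of_comp quotientParametrization.toLinearMap ?_
  convert AdjoinRoot.linearIndependent_root_X_pow_pow (R := R) (n := 8)
    (w := fun e : normalExponents => 2 * e.1.1 + 3 * e.1.2) (by decide) (by decide) using 1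
  ext e
  exact quotientParametrization_normalClass e

variable (R) in
def normalBasis [Nontrivial R] :
    Module.Basis normalExponents R (MvPolynomial (Fin 2) R ⧸ ideal R) :=
  .mk linearIndependent_normalClass top_le_span_range_normalClass

end CuspJet

end

/-- For the cusp `f = Y^2 - X^3` in `ℂ[X,Y]` with `m = ⟨X,Y⟩`, the quotient
`ℂ[X,Y]/⟨Y^2 - X^3, m^4⟩` has `ℂ`-dimension 7. -/
theorem length_cusp_subscheme :
    Module.finrank ℂ
      (MvPolynomial (Fin 2) ℂ ⧸
        (Ideal.span ({X 1 ^ 2 - X 0 ^ 3} : Set (MvPolynomial (Fin 2) ℂ)) ⊔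
          (Ideal.span ({X 0, X 1} : Set (MvPolynomial (Fin 2) ℂ))) ^ 4)) = 7 := by
  rw [Module.finrank_eq_card_basis (CuspJet.normalBasis ℂ), Fintype.card_coe]
  rfl
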